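/- For every integer ℓ ≥ n₀, the family (Ψ_n^{(ℓ)})_{n∈ℤ} satisfies: Ψ_n^{(ℓ)}(0) = 1 if n = ℓ and Ψ_n^{(ℓ)}(0) = 0 otherwise, and for every n ∈ ℤ with n ≥ n₀ + 1 and every t > 0, d/dt Ψ_n^{(ℓ)}(t) = (γ(2^n)/4)·(Ψ_{n−1}^{(ℓ)}(t) − Ψ_n^{(ℓ)}(t)). Moreover there exists a constant c₁ > 0 depending only on β such that |Ψ_n^{(ℓ)}(t) − Ψ_{n+1}^{(ℓ)}(t)| ≤ c₁·2^{−β(n−ℓ)}·e^{−γ(2^ℓ)t/4} for all n ≥ ℓ ≥ n₀ and all t > 0. -/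

import Mathlib

open Filter Topology Asymptotics MeasureTheory

noncomputable section

/-- The hypotheses on the fragmentation coefficient `γ` in the region `n ≥ n₀`:
monotonicity along powers of two and two-sided power-law bounds of exponent `β`. -/
def GammaHyp (β : ℝ) (γ : ℝ → ℝ) (n₀ : ℕ) : Prop :=
  (∀ ξ : ℝ, 0 < ξ → 0 < γ ξ) ∧
  (∀ n : ℤ, (n₀:ℤ) ≤ n → γ ((2:ℝ) ^ n) < γ ((2:ℝ) ^ (n + 1))) ∧
  ∀ n m : ℤ, (n₀:ℤ) ≤ n → (n₀:ℤ) ≤ m →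
    1 / 2 * (2:ℝ) ^ (β * ((n:ℝ) - (m:ℝ))) ≤ γ ((2:ℝ) ^ n) / γ ((2:ℝ) ^ m) ∧
      γ ((2:ℝ) ^ n) / γ ((2:ℝ) ^ m) ≤ 3 / 2 * (2:ℝ) ^ (β * ((n:ℝ) - (m:ℝ)))

/-- The fundamental solution
`Ψ_n^{(ℓ)}(t) = Σ_{k=ℓ}^n (γ(2^k)/γ(2^ℓ)) ∏_{j=ℓ, j≠k}^n (1 − γ(2^k)/γ(2^j))⁻¹ e^{−γ(2^k)t/4}`
for `n ≥ ℓ`, and `Ψ_n^{(ℓ)}(t) = 0` for `n < ℓ`. -/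
def Psi (γ : ℝ → ℝ) (l n : ℤ) (t : ℝ) : ℝ :=
  if l ≤ n then
    ∑ c ∈ Finset.Icc l n,
      γ ((2:ℝ) ^ c) / γ ((2:ℝ) ^ l) *
        (∏ j ∈ (Finset.Icc l n).erase c, (1 - γ ((2:ℝ) ^ c) / γ ((2:ℝ) ^ j))⁻¹) *
        Real.exp (-(γ ((2:ℝ) ^ c) * t / 4))
  else 0

/-!
Write `a k = γ (2 ^ k)` and `Ψ_n = ∑_{k=l}^n A_{n,k} e^{-a_k t/4}`. Removing the factor `j = n+1`
gives `A_{n,k} = A_{n+1,k} (1 - a_k/a_{n+1})`, hence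
`Ψ_n - Ψ_{n+1} = -∑_{k=l}^{n+1} (a_k/a_{n+1}) A_{n+1,k} e^{-a_k t/4} = (4/a_{n+1}) Ψ'_{n+1}`,
which is the differential equation. At `t = 0`, `∑_k A_{n,k}` is a multiple of the sum of the
leading coefficients of the Lagrange basis at the nodes `-a_k`, which vanishes for two or more
nodes.

For the bound put `Q = 2^β > 2`. In `A_{n+1,k}` the factors with `j > k` are `1 + O(Q^{k-j})`,
with product at most `e^6`, and those with `j < k` are `O(Q^{j-k})`. So the `k`-th term of
`Ψ_n - Ψ_{n+1}` is at most `(9/4) e^6 Q^{l-n-1} e^{-a_l t/4}` times `∏_{d<i} r Q^{-(d+1)}`, where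
`i = k - l` and `r = Q² (1/2 - Q⁻¹)⁻¹`; these products decay like `Q^{-i²/2}`, so their sum is a
constant depending on `β` only.
-/

open Finset

theorem Lagrange.sum_prod_erase_inv_sub_eq_zero {F ι : Type*} [Field F] [DecidableEq ι]
    {s : Finset ι} {v : ι → F} (hvs : Set.InjOn v s) (hs : 2 ≤ #s) :
    ∑ i ∈ s, ∏ j ∈ s.erase i, (v i - v j)⁻¹ = 0 := by
  -- the summands are the leading coefficients of the Lagrange basis polynomials, which sum to `1`
  have hcoeff : ∀ i ∈ s,
      ∏ j ∈ s.erase i, (v i - v j)⁻¹ = (Lagrange.basis s v i).coeff (#s - 1) := by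
    intro i hi
    rw [prod_inv_distrib, ← Lagrange.leadingCoeff_basis hvs hi, Polynomial.leadingCoeff,
      Lagrange.natDegree_basis hvs hi]
  rw [sum_congr rfl hcoeff, ← Polynomial.finsetSum_coeff,
    Lagrange.sum_basis hvs (card_pos.mp (by omega)), Polynomial.coeff_one, if_neg (by omega)]

def psiCoeff (a : ℤ → ℝ) (l n k : ℤ) : ℝ :=
  a k / a l * ∏ j ∈ (Icc l n).erase k, (1 - a k / a j)⁻¹

-- `Psi` without its `if`: for `n < l` the sum is empty.
def psi (a : ℤ → ℝ) (l n : ℤ) (t : ℝ) : ℝ :=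
  ∑ k ∈ Icc l n, psiCoeff a l n k * Real.exp (-(a k * t / 4))

lemma Psi_eq_psi (γ : ℝ → ℝ) (l n : ℤ) (t : ℝ) :
    Psi γ l n t = psi (fun k => γ ((2:ℝ) ^ k)) l n t := by
  rw [Psi, psi]
  split_ifs with h
  · rfl
  · rw [Icc_eq_empty h, sum_empty]

section Psi

variable {a : ℤ → ℝ} {l n : ℤ}

lemma psiCoeff_self (h : a l ≠ 0) : psiCoeff a l l l = 1 := by
  simp [psiCoeff, h]

lemma sum_psiCoeff_eq_zero (hln : l < n) (ha : ∀ k ∈ Icc l n, a k ≠ 0)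
    (hinj : Set.InjOn a (Icc l n)) : ∑ k ∈ Icc l n, psiCoeff a l n k = 0 := by
  have hterm : ∀ k ∈ Icc l n, psiCoeff a l n k =
      (∏ j ∈ Icc l n, a j) / a l * ∏ j ∈ (Icc l n).erase k, (-a k - -a j)⁻¹ := by
    intro k hk
    have hfac : ∀ j ∈ (Icc l n).erase k, (1 - a k / a j)⁻¹ = a j * (-a k - -a j)⁻¹ := by
      intro j hj
      rw [neg_sub_neg, one_sub_div (ha j (mem_of_mem_erase hj)), inv_div, div_eq_mul_inv]
    rw [psiCoeff, prod_congr rfl hfac, prod_mul_distrib, ← mul_prod_erase _ _ hk]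
    ring
  have hneg : Set.InjOn (fun k => -a k) (Icc l n) := fun j hj k hk h => hinj hj hk (neg_inj.mp h)
  rw [sum_congr rfl hterm, ← mul_sum,
    Lagrange.sum_prod_erase_inv_sub_eq_zero hneg (by rw [Int.card_Icc]; omega), mul_zero]

lemma psi_zero (ha : ∀ k ∈ Icc l n, a k ≠ 0) (hinj : Set.InjOn a (Icc l n)) :
    psi a l n 0 = if n = l then 1 else 0 := by
  simp only [psi, mul_zero, zero_div, neg_zero, Real.exp_zero, mul_one]
  rcases lt_trichotomy n l with h | rfl | h
  · rw [Icc_eq_empty_of_lt h, sum_empty, if_neg h.ne]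
  · rw [Icc_self, sum_singleton, psiCoeff_self (ha n (by simp)), if_pos rfl]
  · rw [sum_psiCoeff_eq_zero h ha hinj, if_neg h.ne']

lemma psiCoeff_eq_psiCoeff_succ_mul {k : ℤ} (hk : k ∈ Icc l n) (h0 : a (n + 1) ≠ 0)
    (hne : a k ≠ a (n + 1)) :
    psiCoeff a l n k = psiCoeff a l (n + 1) k * (1 - a k / a (n + 1)) := by
  obtain ⟨hlk, hkn⟩ := mem_Icc.mp hk
  have h1 : 1 - a k / a (n + 1) ≠ 0 := by
    rw [sub_ne_zero, ne_comm, Ne, div_eq_one_iff_eq h0]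
    exact hne
  rw [psiCoeff, psiCoeff, ← insert_Icc_right_eq_Icc_add_one (by omega),
    erase_insert_of_ne (by omega), prod_insert (by simp)]
  field_simp

lemma psi_sub_psi_succ (h0 : a (n + 1) ≠ 0) (hne : ∀ k ∈ Icc l n, a k ≠ a (n + 1)) (t : ℝ) :
    psi a l n t - psi a l (n + 1) t =
      -∑ k ∈ Icc l (n + 1), a k / a (n + 1) * psiCoeff a l (n + 1) k *
        Real.exp (-(a k * t / 4)) := by
  rcases lt_or_ge (n + 1) l with h | h
  · simp [psi, Icc_eq_empty_of_lt h, Icc_eq_empty_of_lt (show n < l by omega)]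
  rw [psi, psi, ← insert_Icc_right_eq_Icc_add_one h, sum_insert (by simp),
    sum_insert (by simp), div_self h0]
  have hterm : ∀ k ∈ Icc l n, psiCoeff a l n k * Real.exp (-(a k * t / 4)) =
      psiCoeff a l (n + 1) k * Real.exp (-(a k * t / 4)) -
        a k / a (n + 1) * psiCoeff a l (n + 1) k * Real.exp (-(a k * t / 4)) := by
    intro k hk
    rw [psiCoeff_eq_psiCoeff_succ_mul hk h0 (hne k hk)]
    ring
  rw [sum_congr rfl hterm, sum_sub_distrib]
  ring

lemma hasDerivAt_psi (l n : ℤ) (t : ℝ) :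
    HasDerivAt (psi a l n)
      (-∑ k ∈ Icc l n, a k / 4 * psiCoeff a l n k * Real.exp (-(a k * t / 4))) t := by
  rw [← sum_neg_distrib]
  refine HasDerivAt.fun_sum fun k _ => ?_
  have hlin : HasDerivAt (fun s => -(a k * s / 4)) (-(a k / 4)) t := by
    simpa using (((hasDerivAt_id t).const_mul (a k)).div_const 4).fun_neg
  exact (hlin.exp.const_mul _).congr_deriv (by ring)

lemma hasDerivAt_psi_eq (h0 : a n ≠ 0) (hinj : Set.InjOn a (Icc l n)) (t : ℝ) :
    HasDerivAt (psi a l n) (a n / 4 * (psi a l (n - 1) t - psi a l n t)) t := by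
  have hne : ∀ k ∈ Icc l (n - 1), a k ≠ a (n - 1 + 1) := by
    intro k hk hk'
    rw [sub_add_cancel] at hk'
    obtain ⟨hlk, hkn⟩ := mem_Icc.mp hk
    have := hinj (mem_Icc.mpr ⟨hlk, by omega⟩) (mem_Icc.mpr ⟨by omega, le_rfl⟩) hk'
    omega
  have hdiff := psi_sub_psi_succ (l := l) (n := n - 1) (by rwa [sub_add_cancel]) hne t
  rw [sub_add_cancel] at hdiff
  convert hasDerivAt_psi l n t using 1
  rw [hdiff, mul_neg, mul_sum]
  congr 1
  refine sum_congr rfl fun k _ => ?_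
  field_simp

end Psi

@[to_additive]
lemma Int.prod_Ioc_sub_eq_prod_range {M : Type*} [CommMonoid M] (f : ℤ → M) (k N : ℤ) :
    ∏ j ∈ Ioc k N, f (k - j) = ∏ d ∈ Finset.range (N - k).toNat, f (-(d + 1)) := by
  rw [Int.Ioc_eq_finset_map, prod_map]
  refine prod_congr rfl fun d _ => congrArg f ?_
  simp only [Function.Embedding.trans_apply, Nat.castEmbedding_apply, addLeftEmbedding_apply]
  ring

lemma Int.prod_Ico_sub_eq_prod_range {M : Type*} [CommMonoid M] (f : ℤ → M) (l k : ℤ) :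
    ∏ j ∈ Ico l k, f (j - k) = ∏ d ∈ Finset.range (k - l).toNat, f (-(d + 1)) := by
  rw [Int.Ico_eq_finset_map, prod_map, ← prod_range_reflect]
  refine prod_congr rfl fun d hd => congrArg f ?_
  simp only [Function.Embedding.trans_apply, Nat.castEmbedding_apply, addLeftEmbedding_apply]
  have := mem_range.mp hd
  omega

lemma zpow_neg_natCast_add_one {α : Type*} [DivisionRing α] (x : α) (d : ℕ) :
    x ^ (-((d : ℤ) + 1)) = x⁻¹ ^ (d + 1) := by
  rw [zpow_neg, ← inv_zpow, show (d : ℤ) + 1 = ((d + 1 : ℕ) : ℤ) by push_cast; rfl, zpow_natCast]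

lemma summable_prod_range_mul_pow (r : ℝ) {q : ℝ} (hq : |q| < 1) :
    Summable fun i : ℕ => ∏ d ∈ range i, r * q ^ (d + 1) := by
  refine summable_of_ratio_norm_eventually_le (r := 1 / 2) (by norm_num) ?_
  have hlim : Tendsto (fun d : ℕ => |r| * |q| ^ (d + 1)) atTop (𝓝 0) := by
    simpa using ((tendsto_pow_atTop_nhds_zero_of_lt_one (abs_nonneg q) hq).comp
      (tendsto_add_atTop_nat 1)).const_mul |r|
  filter_upwards [hlim.eventually (ge_mem_nhds (by norm_num : (0:ℝ) < 1 / 2))] with i hi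
  rw [prod_range_succ, norm_mul, mul_comm (1 / 2)]
  refine mul_le_mul_of_nonneg_left ?_ (norm_nonneg _)
  simpa [abs_mul, abs_pow] using hi

lemma sum_Icc_toNat_sub_le_tsum {f : ℕ → ℝ} (hf : Summable f) (hf0 : ∀ i, 0 ≤ f i) (l N : ℤ) :
    ∑ k ∈ Icc l N, f (k - l).toNat ≤ ∑' i, f i := by
  rw [← sum_image (g := fun k => (k - l).toNat) fun x hx y hy h => by
    simp only [coe_Icc, Set.mem_Icc] at hx hy h; omega]
  exact hf.sum_le_tsum _ fun i _ => hf0 i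

def PowerGrowth (Q : ℝ) (a : ℤ → ℝ) (n₀ : ℤ) : Prop :=
  ∀ m n : ℤ, n₀ ≤ m → n₀ ≤ n →
    1 / 2 * Q ^ (n - m) ≤ a n / a m ∧ a n / a m ≤ 3 / 2 * Q ^ (n - m)

lemma GammaHyp.powerGrowth {β : ℝ} {γ : ℝ → ℝ} {n₀ : ℕ} (hγ : GammaHyp β γ n₀) :
    PowerGrowth (2 ^ β) (fun k => γ ((2:ℝ) ^ k)) n₀ := by
  intro m n hm hn
  have h : (2:ℝ) ^ (β * ((n:ℝ) - (m:ℝ))) = (2 ^ β) ^ (n - m) := by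
    rw [← Real.rpow_mul_intCast zero_le_two]
    push_cast
    rfl
  simpa only [h] using hγ.2.2 n m hn hm

lemma inv_two_sub_inv_pos {Q : ℝ} (hQ : 2 < Q) : 0 < 2⁻¹ - Q⁻¹ :=
  sub_pos.mpr ((inv_lt_inv₀ (by linarith) two_pos).mpr hQ)

namespace PowerGrowth

variable {Q : ℝ} {a : ℤ → ℝ} {n₀ : ℤ}

lemma one_lt_div (hg : PowerGrowth Q a n₀) (hQ : 2 < Q) {m n : ℤ} (hm : n₀ ≤ m) (hmn : m < n) :
    1 < a n / a m :=
  calc 1 < 1 / 2 * Q := by linarith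
    _ ≤ 1 / 2 * Q ^ (n - m) := by
      gcongr
      simpa using zpow_le_zpow_right₀ (by linarith : 1 ≤ Q) (show (1:ℤ) ≤ n - m by omega)
    _ ≤ a n / a m := (hg m n hm (by omega)).1

lemma strictMonoOn (hg : PowerGrowth Q a n₀) (hQ : 2 < Q) (ha : ∀ k, 0 < a k) :
    StrictMonoOn a (Set.Ici n₀) := fun m hm _ _ hmn =>
  (one_lt_div₀ (ha m)).mp (hg.one_lt_div hQ hm hmn)

lemma abs_inv_one_sub_div_le_exp (hg : PowerGrowth Q a n₀) (hQ : 2 < Q) (ha : ∀ k, 0 < a k)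
    {k j : ℤ} (hk : n₀ ≤ k) (hkj : k < j) :
    |1 - a k / a j|⁻¹ ≤ Real.exp (6 * Q ^ (k - j)) := by
  have hx0 : 0 ≤ a k / a j := (div_pos (ha k) (ha j)).le
  have hx : a k / a j ≤ 3 / 2 * Q ^ (k - j) := (hg j k (by omega) hk).2
  have hQk : Q ^ (k - j) ≤ Q⁻¹ := by
    simpa using zpow_le_zpow_right₀ (by linarith : 1 ≤ Q) (show k - j ≤ -1 by omega)
  have hQinv : Q⁻¹ < 2⁻¹ := (inv_lt_inv₀ (by linarith) two_pos).mpr hQ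
  have hx34 : a k / a j ≤ 3 / 4 := by linarith
  rw [abs_of_pos (by linarith)]
  calc (1 - a k / a j)⁻¹ ≤ 1 + 4 * (a k / a j) := by
        rw [inv_le_iff_one_le_mul₀ (by linarith)]
        nlinarith
    _ ≤ Real.exp (4 * (a k / a j)) := by linarith [Real.add_one_le_exp (4 * (a k / a j))]
    _ ≤ Real.exp (6 * Q ^ (k - j)) := Real.exp_le_exp.mpr (by linarith)

lemma abs_inv_one_sub_div_le (hg : PowerGrowth Q a n₀) (hQ : 2 < Q) {j k : ℤ} (hj : n₀ ≤ j)
    (hjk : j < k) : |1 - a k / a j|⁻¹ ≤ (2⁻¹ - Q⁻¹)⁻¹ * Q ^ (j - k) := by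
  have hx : 1 / 2 * Q ^ (k - j) ≤ a k / a j := (hg j k hj (by omega)).1
  have hQk : Q ≤ Q ^ (k - j) := by
    simpa using zpow_le_zpow_right₀ (by linarith : 1 ≤ Q) (show (1:ℤ) ≤ k - j by omega)
  have hQ0 : 0 < Q := by linarith
  have hc := inv_two_sub_inv_pos hQ
  have hQinv : Q⁻¹ * Q ^ (k - j) ≥ 1 := by
    calc 1 = Q⁻¹ * Q := (inv_mul_cancel₀ hQ0.ne').symm
      _ ≤ Q⁻¹ * Q ^ (k - j) := by gcongr
  have hkey : (2⁻¹ - Q⁻¹) * Q ^ (k - j) ≤ a k / a j - 1 := by linarith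
  have hpos : 0 < (2⁻¹ - Q⁻¹) * Q ^ (k - j) := by positivity
  rw [abs_sub_comm, abs_of_pos (by linarith)]
  calc (a k / a j - 1)⁻¹ ≤ ((2⁻¹ - Q⁻¹) * Q ^ (k - j))⁻¹ := inv_anti₀ hpos hkey
    _ = (2⁻¹ - Q⁻¹)⁻¹ * Q ^ (j - k) := by
      rw [mul_inv, ← zpow_neg, neg_sub]

lemma prod_Ioc_abs_inv_one_sub_div_le (hg : PowerGrowth Q a n₀) (hQ : 2 < Q)
    (ha : ∀ k, 0 < a k) {k : ℤ} (hk : n₀ ≤ k) (N : ℤ) :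
    ∏ j ∈ Ioc k N, |1 - a k / a j|⁻¹ ≤ Real.exp 6 := by
  have hgeom : ∑ j ∈ Ioc k N, Q ^ (k - j) ≤ 1 := by
    rw [Int.sum_Ioc_sub_eq_sum_range (fun x => Q ^ x)]
    calc ∑ d ∈ range (N - k).toNat, Q ^ (-((d : ℤ) + 1))
        ≤ ∑ d ∈ range (N - k).toNat, (1 / 2 : ℝ) ^ d * (1 / 2) := by
          refine sum_le_sum fun d _ => ?_
          rw [zpow_neg_natCast_add_one, ← pow_succ, ← one_div]
          have : Q⁻¹ ≤ 1 / 2 := by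
            rw [one_div]
            exact (inv_le_inv₀ (by linarith) two_pos).mpr hQ.le
          gcongr
      _ ≤ 1 := by
          rw [← sum_mul]
          linarith [sum_geometric_two_le (N - k).toNat]
  calc ∏ j ∈ Ioc k N, |1 - a k / a j|⁻¹ ≤ ∏ j ∈ Ioc k N, Real.exp (6 * Q ^ (k - j)) :=
        prod_le_prod (fun j _ => by positivity) fun j hj =>
          hg.abs_inv_one_sub_div_le_exp hQ ha hk (mem_Ioc.mp hj).1
    _ = Real.exp (6 * ∑ j ∈ Ioc k N, Q ^ (k - j)) := by rw [← Real.exp_sum, mul_sum]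
    _ ≤ Real.exp 6 := Real.exp_le_exp.mpr (by linarith)

lemma prod_Ico_abs_inv_one_sub_div_le (hg : PowerGrowth Q a n₀) (hQ : 2 < Q) {l : ℤ}
    (hl : n₀ ≤ l) (k : ℤ) :
    ∏ j ∈ Ico l k, |1 - a k / a j|⁻¹ ≤
      ∏ d ∈ range (k - l).toNat, (2⁻¹ - Q⁻¹)⁻¹ * Q⁻¹ ^ (d + 1) := by
  calc ∏ j ∈ Ico l k, |1 - a k / a j|⁻¹ ≤ ∏ j ∈ Ico l k, (2⁻¹ - Q⁻¹)⁻¹ * Q ^ (j - k) :=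
        prod_le_prod (fun j _ => by positivity) fun j hj =>
          hg.abs_inv_one_sub_div_le hQ (hl.trans (mem_Ico.mp hj).1) (mem_Ico.mp hj).2
    _ = _ := by simp only [Int.prod_Ico_sub_eq_prod_range (fun x => (2⁻¹ - Q⁻¹)⁻¹ * Q ^ x),
          zpow_neg_natCast_add_one]

end PowerGrowth

lemma abs_psiCoeff_eq {a : ℤ → ℝ} (ha : ∀ k, 0 < a k) {l N k : ℤ} (hk : k ∈ Icc l N) :
    |psiCoeff a l N k| = a k / a l *
      ((∏ j ∈ Ico l k, |1 - a k / a j|⁻¹) * ∏ j ∈ Ioc k N, |1 - a k / a j|⁻¹) := by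
  obtain ⟨hlk, hkN⟩ := mem_Icc.mp hk
  have hsplit : (Icc l N).erase k = Ico l k ∪ Ioc k N := by
    ext j; simp only [mem_erase, mem_Icc, mem_union, mem_Ico, mem_Ioc]; omega
  have hdisj : Disjoint (Ico l k) (Ioc k N) :=
    disjoint_left.mpr fun j hj hj' => by simp only [mem_Ico, mem_Ioc] at hj hj'; omega
  simp only [psiCoeff, hsplit, prod_union hdisj, abs_mul, abs_prod, abs_inv,
    abs_of_pos (div_pos (ha k) (ha l))]

def psiDiffTerm (Q : ℝ) (i : ℕ) : ℝ :=
  ∏ d ∈ range i, Q ^ 2 * (2⁻¹ - Q⁻¹)⁻¹ * Q⁻¹ ^ (d + 1)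

def psiDiffConst (Q : ℝ) : ℝ :=
  9 / 4 * Real.exp 6 * ∑' i, psiDiffTerm Q i

section PsiDiff

variable {Q : ℝ} (hQ : 2 < Q)
include hQ

lemma summable_psiDiffTerm : Summable (psiDiffTerm Q) := by
  refine summable_prod_range_mul_pow _ ?_
  rw [abs_inv, abs_of_pos (by linarith)]
  exact inv_lt_one_of_one_lt₀ (by linarith)

lemma psiDiffTerm_nonneg (i : ℕ) : 0 ≤ psiDiffTerm Q i := by
  have hc := inv_two_sub_inv_pos hQ
  have hQ0 : 0 < Q := by linarith
  exact prod_nonneg fun d _ => by positivity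

lemma psiDiffConst_pos : 0 < psiDiffConst Q := by
  have hsum := (summable_psiDiffTerm hQ).tsum_pos (psiDiffTerm_nonneg hQ) 0 (by simp [psiDiffTerm])
  unfold psiDiffConst
  positivity

variable {a : ℤ → ℝ} {n₀ : ℤ} (hg : PowerGrowth Q a n₀) (ha : ∀ k, 0 < a k)
include hg ha

lemma div_mul_abs_psiCoeff_le {l N k : ℤ} (hl : n₀ ≤ l) (hk : k ∈ Icc l N) :
    a k / a N * |psiCoeff a l N k| ≤
      9 / 4 * Real.exp 6 * Q ^ (l - N) *
        psiDiffTerm Q (k - l).toNat := by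
  obtain ⟨hlk, hkN⟩ := mem_Icc.mp hk
  set i := (k - l).toNat
  have hi : (i : ℤ) = k - l := Int.toNat_of_nonneg (by omega)
  have hQ0 : 0 < Q := by linarith
  have hkN' : a k / a N ≤ 3 / 2 * (Q ^ (l - N) * Q ^ i) := by
    have h := (hg N k (by omega) (by omega)).2
    rwa [show k - N = (l - N) + (k - l) by ring, zpow_add₀ hQ0.ne', ← hi, zpow_natCast] at h
  have hkl : a k / a l ≤ 3 / 2 * Q ^ i := by
    simpa only [← hi, zpow_natCast] using (hg l k hl (by omega)).2
  rw [abs_psiCoeff_eq ha hk]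
  calc a k / a N * (a k / a l *
        ((∏ j ∈ Ico l k, |1 - a k / a j|⁻¹) * ∏ j ∈ Ioc k N, |1 - a k / a j|⁻¹))
      ≤ 3 / 2 * (Q ^ (l - N) * Q ^ i) * (3 / 2 * Q ^ i *
        ((∏ d ∈ range i, (2⁻¹ - Q⁻¹)⁻¹ * Q⁻¹ ^ (d + 1)) * Real.exp 6)) := by
        have hlo := hg.prod_Ico_abs_inv_one_sub_div_le hQ hl k
        have hhi := hg.prod_Ioc_abs_inv_one_sub_div_le hQ ha (hl.trans hlk) N
        have := (div_pos (ha k) (ha l)).le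
        have := inv_two_sub_inv_pos hQ
        gcongr
    _ = 9 / 4 * Real.exp 6 * Q ^ (l - N) * psiDiffTerm Q i := by
        simp only [psiDiffTerm, prod_mul_distrib, prod_const, card_range]
        ring

lemma abs_psi_sub_psi_succ_le {l n : ℤ} (hl : n₀ ≤ l) {t : ℝ} (ht : 0 ≤ t) :
    |psi a l n t - psi a l (n + 1) t| ≤
      psiDiffConst Q * Q ^ (l - n) * Real.exp (-(a l * t / 4)) := by
  set C := 9 / 4 * Real.exp 6 * Q ^ (l - (n + 1)) * Real.exp (-(a l * t / 4))
  have hmono := hg.strictMonoOn hQ ha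
  have hne : ∀ k ∈ Icc l n, a k ≠ a (n + 1) := fun k hk => by
    obtain ⟨hlk, hkn⟩ := mem_Icc.mp hk
    exact (hmono (Set.mem_Ici.mpr (by omega)) (Set.mem_Ici.mpr (by omega)) (by omega)).ne
  have hterm : ∀ k ∈ Icc l (n + 1), |a k / a (n + 1) * psiCoeff a l (n + 1) k *
      Real.exp (-(a k * t / 4))| ≤ C * psiDiffTerm Q (k - l).toNat := by
    intro k hk
    have hlk : a l ≤ a k := hmono.monotoneOn (Set.mem_Ici.mpr hl)
      (Set.mem_Ici.mpr (hl.trans (mem_Icc.mp hk).1)) (mem_Icc.mp hk).1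
    have hexp : Real.exp (-(a k * t / 4)) ≤ Real.exp (-(a l * t / 4)) :=
      Real.exp_le_exp.mpr (by nlinarith)
    rw [abs_mul, abs_mul, abs_of_pos (div_pos (ha k) (ha (n + 1))), Real.abs_exp]
    calc a k / a (n + 1) * |psiCoeff a l (n + 1) k| * Real.exp (-(a k * t / 4))
        ≤ (9 / 4 * Real.exp 6 * Q ^ (l - (n + 1)) * psiDiffTerm Q (k - l).toNat) *
            Real.exp (-(a l * t / 4)) :=
          mul_le_mul (div_mul_abs_psiCoeff_le hQ hg ha hl hk) hexp (by positivity)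
            (mul_nonneg (by positivity) (psiDiffTerm_nonneg hQ _))
      _ = C * psiDiffTerm Q (k - l).toNat := by ring
  have hQn : Q ^ (l - (n + 1)) ≤ Q ^ (l - n) := zpow_le_zpow_right₀ (by linarith) (by omega)
  rw [psi_sub_psi_succ (ha _).ne' hne, abs_neg]
  calc |∑ k ∈ Icc l (n + 1), a k / a (n + 1) * psiCoeff a l (n + 1) k *
        Real.exp (-(a k * t / 4))|
      ≤ ∑ k ∈ Icc l (n + 1), C * psiDiffTerm Q (k - l).toNat :=
        (abs_sum_le_sum_abs _ _).trans (sum_le_sum hterm)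
    _ ≤ C * ∑' i, psiDiffTerm Q i := by
        rw [← mul_sum]
        gcongr
        exact sum_Icc_toNat_sub_le_tsum (summable_psiDiffTerm hQ) (psiDiffTerm_nonneg hQ) _ _
    _ = 9 / 4 * Real.exp 6 * (∑' i, psiDiffTerm Q i) * Q ^ (l - (n + 1)) *
          Real.exp (-(a l * t / 4)) := by
        ring
    _ ≤ psiDiffConst Q * Q ^ (l - n) * Real.exp (-(a l * t / 4)) := by
        have : 0 ≤ ∑' i, psiDiffTerm Q i := tsum_nonneg (psiDiffTerm_nonneg hQ)
        rw [psiDiffConst]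
        gcongr

end PsiDiff

/-- `Ψ^{(ℓ)}` has initial datum `δ(n−ℓ)`, solves
`dΨ_n/dt = (γ(2^n)/4)(Ψ_{n−1} − Ψ_n)` for `n ≥ n₀ + 1`, and its discrete derivative satisfies
`|Ψ_n^{(ℓ)}(t) − Ψ_{n+1}^{(ℓ)}(t)| ≤ c₁ 2^{−β(n−ℓ)} e^{−γ(2^ℓ)t/4}` with `c₁` depending only
on `β`. -/
theorem stmt9 (β : ℝ) (hβ : β ∈ Set.Ioo (1:ℝ) 2) :
    ∃ c₁ > (0:ℝ), ∀ (γ : ℝ → ℝ) (n₀ : ℕ), GammaHyp β γ n₀ →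
      ∀ l : ℤ, (n₀:ℤ) ≤ l →
        (∀ n : ℤ, Psi γ l n 0 = if n = l then 1 else 0) ∧
        (∀ n : ℤ, (n₀:ℤ) + 1 ≤ n → ∀ t : ℝ, 0 < t →
          HasDerivAt (fun s => Psi γ l n s)
            (γ ((2:ℝ) ^ n) / 4 * (Psi γ l (n - 1) t - Psi γ l n t)) t) ∧
        (∀ n : ℤ, l ≤ n → ∀ t : ℝ, 0 < t →
          |Psi γ l n t - Psi γ l (n + 1) t| ≤
            c₁ * (2:ℝ) ^ (-(β * ((n:ℝ) - (l:ℝ)))) * Real.exp (-(γ ((2:ℝ) ^ l) * t / 4))) := by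
  have hQ : (2:ℝ) < 2 ^ β := by
    simpa using Real.rpow_lt_rpow_of_exponent_lt one_lt_two hβ.1
  refine ⟨psiDiffConst (2 ^ β), psiDiffConst_pos hQ, fun γ n₀ hγ l hl => ?_⟩
  have ha : ∀ k : ℤ, 0 < γ ((2:ℝ) ^ k) := fun k => hγ.1 _ (zpow_pos two_pos k)
  have hg := hγ.powerGrowth
  have hinj (n : ℤ) : Set.InjOn (fun k : ℤ => γ ((2:ℝ) ^ k)) (Icc l n) :=
    (hg.strictMonoOn hQ ha).injOn.mono fun k hk => Set.mem_Ici.mpr (hl.trans (mem_Icc.mp hk).1)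
  refine ⟨fun n => ?_, fun n _ t _ => ?_, fun n _ t ht => ?_⟩
  · rw [Psi_eq_psi]
    exact psi_zero (fun k _ => (ha k).ne') (hinj n)
  · simp only [Psi_eq_psi]
    exact hasDerivAt_psi_eq (ha n).ne' (hinj n) t
  · have hpow : (2:ℝ) ^ (-(β * ((n:ℝ) - (l:ℝ)))) = (2 ^ β) ^ (l - n) := by
      rw [← Real.rpow_mul_intCast zero_le_two]
      push_cast
      ring_nf
    simp only [Psi_eq_psi, hpow]
    exact abs_psi_sub_psi_succ_le hQ hg ha hl ht.le
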